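/- arXiv:2402.02358 — 3 statements merged into one kernel-verified Lean document; each statement's English description precedes it below -/
import Mathlib

section
/- Let p be prime, s ≥ 2 an integer, and n, k positive integers with distinct evaluation points α_1,...,α_n ∈ F_p. If k < (n+1)·log(s)/(2·log(p) + log(s)), then there exist functions τ_1,...,τ_n : F_p → Fin s such that the map sending each polynomial f ∈ F_p[x] of degree < k to (τ_1(f(α_1)), ..., τ_n(f(α_n))) is injective. -/
/-!
Choose `τ` uniformly at random. Two distinct polynomials of degree `< k` agree at fewer than `k`
of the `n` distinct points, so their values differ in at least `n + 1 - k` coordinates, and each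
differing coordinate `i` collides under `τ i` with probability `1 / s`. A union bound over the at
most `p ^ (2k)` pairs of polynomials leaves a collision-free `τ` as soon as `p ^ (2k) < s ^ (n + 1 - k)`,
which is what the hypothesis on `k` says after taking logarithms. The probabilities are replaced by
counting.
-/

open Finset Function Polynomial

theorem natCard_subtype_apply_eq_mul_natCard_le {F β : Type*} [Finite F] [Finite β] {a b : F}
    (hab : a ≠ b) : Nat.card {h : F → β // h a = h b} * Nat.card β ≤ Nat.card (F → β) := by
  classical
  rw [← Nat.card_prod]
  -- `(h, c) ↦ update h b c` forgets only `h b`, which is remembered as `h a`.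
  refine Nat.card_le_card_of_injective (fun q => update q.1.1 b q.2) ?_
  rintro ⟨⟨h, hh⟩, c⟩ ⟨⟨h', hh'⟩, c'⟩ heq
  have hc : c = c' := by simpa using congrFun heq b
  have ha : h a = h' a := by simpa [hab] using congrFun heq a
  subst hc
  congr
  funext x
  by_cases hx : x = b
  · rw [hx, ← hh, ← hh', ha]
  · simpa [hx] using congrFun heq x

theorem natCard_forall_apply_eq_mul_pow_hammingDist_le {ι F β : Type*} [Fintype ι] [Finite F]
    [DecidableEq F] [Finite β] (x y : ι → F) :
    Nat.card {τ : ι → F → β // ∀ i, τ i (x i) = τ i (y i)} * Nat.card β ^ hammingDist x y ≤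
      Nat.card (ι → F → β) := by
  classical
  rw [Nat.card_congr (Equiv.subtypePiEquivPi (p := fun i (h : F → β) => h (x i) = h (y i))),
    Nat.card_pi, Nat.card_pi, hammingDist, ← prod_const, prod_filter, ← prod_mul_distrib]
  refine prod_le_prod' fun i _ => ?_
  split_ifs with h
  · exact natCard_subtype_apply_eq_mul_natCard_le h
  · rw [mul_one]
    exact Finite.card_subtype_le _

theorem exists_forall_eq_of_sq_natCard_lt {X ι F β : Type*} [Finite X] [Fintype ι] [Finite F]
    [DecidableEq F] [Finite β] [Nonempty β] (c : X → ι → F) {m : ℕ}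
    (hc : ∀ x y, x ≠ y → m ≤ hammingDist (c x) (c y)) (hX : Nat.card X ^ 2 < Nat.card β ^ m) :
    ∃ τ : ι → F → β, ∀ x y, (∀ i, τ i (c x i) = τ i (c y i)) → x = y := by
  classical
  have := Fintype.ofFinite X
  have := Fintype.ofFinite F
  have := Fintype.ofFinite β
  set T := ι → F → β
  let collide (q : X × X) : Finset T := {τ | ∀ i, τ i (c q.1 i) = τ i (c q.2 i)}
  by_contra! h
  have hcover : (univ : Finset T) ⊆ univ.offDiag.biUnion collide := fun τ _ => by
    obtain ⟨x, y, hτ, hxy⟩ := h τ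
    exact mem_biUnion.2 ⟨(x, y), by simpa using hxy, by simpa [collide] using hτ⟩
  have hbound (q : X × X) (hq : q ∈ (univ : Finset X).offDiag) :
      #(collide q) * Nat.card β ^ m ≤ Nat.card T := by
    have hcard : #(collide q) = Nat.card {τ : T // ∀ i, τ i (c q.1 i) = τ i (c q.2 i)} := by
      rw [Nat.card_eq_fintype_card, Fintype.card_subtype]
    rw [hcard]
    refine le_trans ?_ (natCard_forall_apply_eq_mul_pow_hammingDist_le (c q.1) (c q.2))
    gcongr
    · exact Nat.card_pos
    · exact hc _ _ (mem_offDiag.1 hq).2.2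
  have hT : 0 < Nat.card T := Nat.card_pos
  have : Nat.card T * Nat.card β ^ m < Nat.card β ^ m * Nat.card T := calc
    Nat.card T * Nat.card β ^ m ≤ #(univ.offDiag.biUnion collide) * Nat.card β ^ m := by
      rw [Nat.card_eq_fintype_card (α := T), ← card_univ]
      gcongr
    _ ≤ (∑ q ∈ (univ : Finset X).offDiag, #(collide q)) * Nat.card β ^ m := by
      gcongr
      exact card_biUnion_le
    _ ≤ ∑ q ∈ (univ : Finset X).offDiag, Nat.card T := by
      rw [sum_mul]
      exact sum_le_sum hbound
    _ ≤ Nat.card X ^ 2 * Nat.card T := by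
      rw [sum_const, smul_eq_mul, sq, ← Nat.card_prod, Nat.card_eq_fintype_card]
      gcongr
      exact (card_le_univ _).trans_eq Nat.card_eq_fintype_card.symm
    _ < Nat.card β ^ m * Nat.card T := by gcongr
  rw [mul_comm] at this
  exact lt_irrefl _ this

namespace Polynomial

instance finite_degreeLT {R : Type*} [CommRing R] [Finite R] (k : ℕ) : Finite (degreeLT R k) :=
  .of_equiv _ (degreeLTEquiv R k).toEquiv.symm

theorem natCard_degreeLT {R : Type*} [CommRing R] (k : ℕ) :
    Nat.card (degreeLT R k) = Nat.card R ^ k := by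
  rw [Nat.card_congr (degreeLTEquiv R k).toEquiv, Nat.card_fun, Nat.card_fin]

theorem card_add_one_sub_le_hammingDist_eval {R ι : Type*} [CommRing R] [IsDomain R]
    [DecidableEq R] [Fintype ι] {α : ι → R} (hα : Injective α) {k : ℕ} {f g : R[X]}
    (hf : f ∈ degreeLT R k) (hg : g ∈ degreeLT R k) (hfg : f ≠ g) :
    Fintype.card ι + 1 - k ≤ hammingDist (fun i => f.eval (α i)) (fun i => g.eval (α i)) := by
  have hagree : #{i | f.eval (α i) = g.eval (α i)} < k := by
    by_contra! hk
    refine hfg (eq_of_degree_sub_lt_of_eval_index_eq {i | f.eval (α i) = g.eval (α i)} hα.injOn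
      ?_ fun i hi => (mem_filter.1 hi).2)
    exact (mem_degreeLT.1 (sub_mem hf hg)).trans_le (by exact_mod_cast hk)
  have hsplit := card_filter_add_card_filter_not (s := univ) fun i => f.eval (α i) = g.eval (α i)
  rw [card_univ] at hsplit
  change _ ≤ #{i | ¬f.eval (α i) = g.eval (α i)}
  omega

end Polynomial

theorem sq_pow_lt_pow_of_lt_log_div {p s n k : ℕ} (hp : 1 < p) (hs : 1 < s)
    (hk : (k : ℝ) < (n + 1) * Real.log s / (2 * Real.log p + Real.log s)) :
    (p ^ k) ^ 2 < s ^ (n + 1 - k) := by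
  have hlogp : 0 < Real.log p := Real.log_pos (by exact_mod_cast hp)
  have hlogs : 0 < Real.log s := Real.log_pos (by exact_mod_cast hs)
  rw [lt_div_iff₀ (by positivity)] at hk
  have hkn : k ≤ n + 1 := by
    by_contra! h
    have : (n : ℝ) + 1 < k := by exact_mod_cast h
    nlinarith
  rw [← pow_mul, ← Nat.cast_lt (α := ℝ), ← Real.log_lt_log_iff (by positivity) (by positivity)]
  push_cast [hkn]
  rw [Real.log_pow, Real.log_pow]
  push_cast [hkn]
  nlinarith

theorem stmt_3_general (p s n k : ℕ) (hp : p.Prime) (hs : 2 ≤ s)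
    (α : Fin n → ZMod p) (hα : Function.Injective α)
    (hksmall : (k : ℝ) < (n + 1) * Real.log s / (2 * Real.log p + Real.log s)) :
    ∃ τ : Fin n → ZMod p → Fin s,
      ∀ f g : Polynomial (ZMod p), f.degree < (k : WithBot ℕ) → g.degree < (k : WithBot ℕ) →
        (∀ i, τ i (f.eval (α i)) = τ i (g.eval (α i))) → f = g := by
  have : Fact p.Prime := ⟨hp⟩
  have : NeZero s := ⟨by omega⟩
  have hcard : Nat.card (degreeLT (ZMod p) k) ^ 2 < Nat.card (Fin s) ^ (n + 1 - k) := by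
    rw [natCard_degreeLT, Nat.card_zmod, Nat.card_fin]
    exact sq_pow_lt_pow_of_lt_log_div hp.one_lt hs hksmall
  obtain ⟨τ, hτ⟩ := exists_forall_eq_of_sq_natCard_lt
    (fun (f : degreeLT (ZMod p) k) i => (f : (ZMod p)[X]).eval (α i)) (fun f g hfg => by
      simpa using card_add_one_sub_le_hammingDist_eval hα f.2 g.2 (Subtype.coe_ne_coe.2 hfg)) hcard
  exact ⟨τ, fun f g hf hg hfg =>
    congrArg Subtype.val (hτ ⟨f, mem_degreeLT.2 hf⟩ ⟨g, mem_degreeLT.2 hg⟩ hfg)⟩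

theorem stmt_3 (p s n k : ℕ) (hp : p.Prime) (hs : 2 ≤ s) (hn : 0 < n) (hk : 0 < k)
    (α : Fin n → ZMod p) (hα : Function.Injective α)
    (hksmall : (k : ℝ) < (n + 1) * Real.log s / (2 * Real.log p + Real.log s)) :
    ∃ τ : Fin n → ZMod p → Fin s,
      ∀ f g : Polynomial (ZMod p), f.degree < (k : WithBot ℕ) → g.degree < (k : WithBot ℕ) →
        (∀ i, τ i (f.eval (α i)) = τ i (g.eval (α i))) → f = g :=
  stmt_3_general p s n k hp hs α hα hksmall
end

section
/- Let p be an odd prime and n ≥ 2 with n ≤ √p. Suppose that for all f_0 ∈ F_p with f_0 ≠ 0 and all f_2 ∈ F_p, the Kloosterman-type sum |Σ_{ν=1}^{⌈n/2⌉} e_p(f_0/ν + f_2·ν)| is at most 0.1·n. Then for t = ⌈p/8⌉ and any ℓ ∈ {0,1,...,n}: every polynomial f ∈ F_p[x] of degree at most 2 satisfying that for all i ∈ {0,...,n} \ {ℓ}, the element f(i)/(i - ℓ) has integer representative in [-t, t], must satisfy f(ℓ) = 0. -/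
/-!
Write `e(x) = exp(2πi x/p)`, `t = ⌈p/8⌉` and suppose `f(ℓ) ≠ 0`. Every phase `f(i)/(i - ℓ)` lies
in `[-t, t]`, so each term of `S = ∑_{i ≠ ℓ} e(f(i)/(i - ℓ))` has real part `> 3/5` once
`p ≥ 100`, whence `‖S‖ > 3n/5`. Taylor expansion at `ℓ` gives
`f(i)/(i - ℓ) = g₁ + f(ℓ)/(i - ℓ) + g₂ (i - ℓ)`, so on a block of `⌈n/2⌉` consecutive `i` on one
side of `ℓ` the sum is `e(g₁)` times an incomplete Kloosterman sum, of norm `≤ n/10`; the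
remaining `≤ n/2` terms contribute at most `n/2`, a contradiction. For `n < 10` (where `p ≥ 100`
may fail) the Kloosterman hypothesis is itself contradictory: the mean square of
`b ↦ ∑_{ν ≤ m} e(1/ν + bν)` over `b` equals `m`.
-/

open Complex Finset Polynomial ComplexConjugate
open scoped Real

theorem sum_norm_sq_sum_mul_addChar {R ι : Type*} [CommRing R] [Fintype R] [DecidableEq R]
    {ψ : AddChar R ℂ} (hψ : ψ.IsPrimitive) {s : Finset ι} {a : ι → R} (ha : Set.InjOn a s)
    (c : ι → ℂ) :
    ∑ b : R, ‖∑ i ∈ s, c i * ψ (b * a i)‖ ^ 2 = Fintype.card R * ∑ i ∈ s, ‖c i‖ ^ 2 := by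
  classical
  have orth : ∀ i ∈ s, ∀ j ∈ s,
      ∑ b : R, ψ (b * a i) * conj (ψ (b * a j)) = if i = j then (Fintype.card R : ℂ) else 0 := by
    intro i hi j hj
    simp_rw [← AddChar.map_neg_eq_conj, ← AddChar.map_add_eq_mul, ← sub_eq_add_neg, ← mul_sub,
      AddChar.sum_mulShift _ hψ, sub_eq_zero, ha.eq_iff hi hj, Nat.cast_ite, Nat.cast_zero]
  apply Complex.ofReal_injective
  push_cast
  calc ∑ b : R, ((‖∑ i ∈ s, c i * ψ (b * a i)‖ : ℂ)) ^ 2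
      = ∑ i ∈ s, ∑ j ∈ s, c i * conj (c j) * ∑ b : R, ψ (b * a i) * conj (ψ (b * a j)) := by
        simp_rw [← Complex.mul_conj', map_sum, map_mul, sum_mul_sum, mul_sum]
        rw [Finset.sum_comm]
        refine sum_congr rfl fun i _ ↦ ?_
        rw [Finset.sum_comm]
        exact sum_congr rfl fun j _ ↦ sum_congr rfl fun b _ ↦ by ring
    _ = Fintype.card R * ∑ i ∈ s, (‖c i‖ : ℂ) ^ 2 := by
        rw [mul_sum]
        refine sum_congr rfl fun i hi ↦ ?_
        rw [sum_congr rfl fun j hj ↦ by rw [orth i hi j hj]]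
        simp [hi, Complex.mul_conj']
        ring

theorem norm_sum_le_norm_sum_add_card_sdiff {ι E : Type*} [SeminormedAddCommGroup E]
    [DecidableEq ι] {s t : Finset ι} (hst : s ⊆ t) {u : ι → E} (hu : ∀ i ∈ t \ s, ‖u i‖ ≤ 1) :
    ‖∑ i ∈ t, u i‖ ≤ ‖∑ i ∈ s, u i‖ + #(t \ s) := by
  rw [← sum_sdiff hst, add_comm ‖_‖]
  refine (norm_add_le _ _).trans (add_le_add_left ?_ _)
  simpa using norm_sum_le_of_le (t \ s) hu

theorem cos_le_re_stdAddChar {N : ℕ} [NeZero N] {a : ZMod N} {t : ℝ}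
    (ha : |(a.valMinAbs : ℝ)| ≤ t) (ht : t ≤ N / 2) :
    Real.cos (2 * π * t / N) ≤ (ZMod.stdAddChar a).re := by
  have hN : (0 : ℝ) < N := by have := NeZero.ne N; positivity
  have hre : (ZMod.stdAddChar a).re = Real.cos (2 * π * a.valMinAbs / N) := by
    conv_lhs => rw [← ZMod.coe_valMinAbs a, ZMod.stdAddChar_coe]
    rw [← exp_ofReal_mul_I_re]
    push_cast
    ring_nf
  rw [hre, ← Real.cos_abs (2 * π * (a.valMinAbs : ℝ) / N)]
  apply Real.cos_le_cos_of_nonneg_of_le_pi (abs_nonneg _)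
  · rw [div_le_iff₀ hN]
    nlinarith [Real.pi_pos]
  · rw [abs_div, abs_mul, abs_of_pos hN, abs_of_pos Real.two_pi_pos]
    gcongr

theorem three_fifths_lt_re_stdAddChar {N : ℕ} [NeZero N] (hN : 100 ≤ N) {a : ZMod N}
    (ha : |a.valMinAbs| ≤ (⌈(N : ℝ) / 8⌉₊ : ℤ)) : 3 / 5 < (ZMod.stdAddChar a).re := by
  set t : ℝ := (⌈(N : ℝ) / 8⌉₊ : ℝ)
  have hN' : (100 : ℝ) ≤ N := by exact_mod_cast hN
  have ht : t ≤ 0.135 * N := by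
    linarith [Nat.ceil_lt_add_one (show 0 ≤ (N : ℝ) / 8 by positivity)]
  have hy : 2 * π * t / N ≤ 0.86 := by
    rw [div_le_iff₀ (by positivity)]
    nlinarith [mul_le_mul_of_nonneg_left ht Real.pi_pos.le, Real.pi_lt_d2]
  refine lt_of_lt_of_le ?_
    (cos_le_re_stdAddChar (t := t) (by simp only [t]; exact_mod_cast ha) (by linarith))
  nlinarith [Real.one_sub_sq_div_two_le_cos (x := 2 * π * t / N),
    show 0 ≤ 2 * π * t / N by positivity]

theorem Polynomial.exists_eval_div_sub_eq {K : Type*} [Field K] {f : K[X]} (hf : f.degree ≤ 2)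
    (c : K) : ∃ g₁ g₂ : K, ∀ x ≠ c,
      f.eval x / (x - c) = g₁ + (f.eval c / (x - c) + g₂ * (x - c)) := by
  have hg : (taylor c f).natDegree < 3 := by
    rw [natDegree_taylor]; exact Nat.lt_succ_of_le (natDegree_le_of_degree_le hf)
  refine ⟨(taylor c f).coeff 1, (taylor c f).coeff 2, fun x hx ↦ ?_⟩
  rw [← taylor_eval_sub c f x, eval_eq_sum_range' hg, ← taylor_coeff_zero c f]
  field_simp [sub_ne_zero.2 hx]
  simp only [sum_range_succ, sum_range_zero]
  ring

theorem Polynomial.degree_neg_comp_sub_le {R : Type*} [Ring R] {f : R[X]} (hf : f.degree ≤ 2)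
    (c : R) : (-(f.comp (C c - X))).degree ≤ 2 := by
  rw [degree_neg]
  refine natDegree_le_iff_degree_le.1 ?_
  calc (f.comp (C c - X)).natDegree ≤ f.natDegree * (C c - X).natDegree := natDegree_comp_le
    _ ≤ 2 * 1 := Nat.mul_le_mul (natDegree_le_of_degree_le hf) (by compute_degree)

noncomputable def incompleteKloosterman (p m : ℕ) [Fact p.Prime] (a b : ZMod p) : ℂ :=
  ∑ ν ∈ Icc 1 m, ZMod.stdAddChar (a / (ν : ZMod p) + b * (ν : ZMod p))

theorem exists_sq_le_norm_incompleteKloosterman {p m : ℕ} [Fact p.Prime] (hmp : m < p)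
    (a : ZMod p) : ∃ b, (m : ℝ) ≤ ‖incompleteKloosterman p m a b‖ ^ 2 := by
  have hinj : Set.InjOn (fun ν : ℕ ↦ (ν : ZMod p)) (Icc 1 m) := by
    intro x hx y hy h
    simp only [coe_Icc, Set.mem_Icc] at hx hy
    simpa [ZMod.val_natCast_of_lt (hx.2.trans_lt hmp), ZMod.val_natCast_of_lt (hy.2.trans_lt hmp)]
      using congrArg ZMod.val h
  have hmean := sum_norm_sq_sum_mul_addChar (ZMod.isPrimitive_stdAddChar p) hinj
    (fun ν : ℕ ↦ ZMod.stdAddChar (a / (ν : ZMod p)))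
  simp only [AddChar.norm_apply, one_pow, sum_const, Nat.card_Icc, add_tsub_cancel_right,
    ZMod.card, nsmul_eq_mul, mul_one, ← AddChar.map_add_eq_mul] at hmean
  obtain ⟨b, -, hb⟩ := exists_le_of_sum_le (s := univ) (f := fun _ ↦ (m : ℝ))
    (g := fun b ↦ ‖incompleteKloosterman p m a b‖ ^ 2) univ_nonempty
    (by simp [incompleteKloosterman, hmean, ZMod.card])
  exact ⟨b, hb⟩

theorem eval_eq_zero_of_valMinAbs_le_of_add_le {p : ℕ} [Fact p.Prime] (hp : 100 ≤ p)
    {n m ℓ : ℕ} (hn : 0 < n) (hnp : n < p) (hnm : n ≤ 2 * m) (hℓm : ℓ + m ≤ n)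
    (hK : ∀ a : ZMod p, a ≠ 0 → ∀ b, ‖incompleteKloosterman p m a b‖ ≤ 0.1 * n)
    {f : (ZMod p)[X]} (hf : f.degree ≤ 2)
    (hbound : ∀ i : ℕ, i ≤ n → i ≠ ℓ →
      |(f.eval (i : ZMod p) / ((i : ZMod p) - (ℓ : ZMod p))).valMinAbs| ≤ (⌈(p : ℝ) / 8⌉₊ : ℤ)) :
    f.eval (ℓ : ZMod p) = 0 := by
  by_contra hf0
  obtain ⟨g₁, g₂, hg⟩ := f.exists_eval_div_sub_eq hf (ℓ : ZMod p)
  set u : ℕ → ℂ := fun i ↦ ZMod.stdAddChar (f.eval (i : ZMod p) / ((i : ZMod p) - (ℓ : ZMod p)))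
  set A := (range (n + 1)).erase ℓ
  set B := (Icc 1 m).map (addRightEmbedding ℓ)
  have hBA : B ⊆ A := by
    rw [show B = Icc (1 + ℓ) (m + ℓ) from map_add_right_Icc 1 m ℓ]
    intro i hi
    simp only [A, mem_Icc, mem_erase, mem_range] at hi ⊢
    omega
  have hA : #A = n := by simp [A, card_erase_of_mem (mem_range.2 (by omega : ℓ < n + 1))]
  have hlower : 3 / 5 * n < ‖∑ i ∈ A, u i‖ := calc
    3 / 5 * n = ∑ i ∈ A, (3 / 5 : ℝ) := by simp [hA, mul_comm]
    _ < ∑ i ∈ A, (u i).re := by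
      refine sum_lt_sum_of_nonempty (card_pos.1 (hA ▸ hn)) fun i hi ↦ ?_
      simp only [A, mem_erase, mem_range] at hi
      exact three_fifths_lt_re_stdAddChar hp (hbound i (by omega) hi.1)
    _ = (∑ i ∈ A, u i).re := (re_sum _ _).symm
    _ ≤ ‖∑ i ∈ A, u i‖ := re_le_norm _
  have hblock : ∑ i ∈ B, u i = ZMod.stdAddChar g₁ * incompleteKloosterman p m (f.eval ↑ℓ) g₂ := by
    rw [sum_map, incompleteKloosterman, mul_sum]
    refine sum_congr rfl fun ν hν ↦ ?_
    have hν0 : (ν : ZMod p) ≠ 0 := by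
      rw [mem_Icc] at hν
      rw [Ne, ZMod.natCast_eq_zero_iff]
      exact Nat.not_dvd_of_pos_of_lt (by omega) (by omega)
    simp only [u, addRightEmbedding_apply, Nat.cast_add]
    rw [hg _ (by simpa using hν0), add_sub_cancel_right, AddChar.map_add_eq_mul]
  have hupper : ‖∑ i ∈ A, u i‖ ≤ 0.1 * n + (n - m : ℕ) := by
    refine (norm_sum_le_norm_sum_add_card_sdiff hBA fun i _ ↦ (AddChar.norm_apply _ _).le).trans ?_
    rw [hblock, norm_mul, AddChar.norm_apply, one_mul, card_sdiff_of_subset hBA, hA]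
    simp only [B, card_map, Nat.card_Icc]
    gcongr
    · exact hK _ hf0 _
    · omega
  have hm : ((n - m : ℕ) : ℝ) ≤ n / 2 := by
    rw [Nat.cast_sub (by omega)]
    linarith [show (n : ℝ) ≤ 2 * m by exact_mod_cast hnm]
  linarith

theorem eval_eq_zero_of_valMinAbs_le {p : ℕ} [Fact p.Prime] (hp : 100 ≤ p)
    {n m ℓ : ℕ} (hn : 0 < n) (hnp : n < p) (hnm : n ≤ 2 * m) (hmn : 2 * m ≤ n + 1)
    (hK : ∀ a : ZMod p, a ≠ 0 → ∀ b, ‖incompleteKloosterman p m a b‖ ≤ 0.1 * n)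
    (hℓ : ℓ ≤ n) {f : (ZMod p)[X]} (hf : f.degree ≤ 2)
    (hbound : ∀ i : ℕ, i ≤ n → i ≠ ℓ →
      |(f.eval (i : ZMod p) / ((i : ZMod p) - (ℓ : ZMod p))).valMinAbs| ≤ (⌈(p : ℝ) / 8⌉₊ : ℤ)) :
    f.eval (ℓ : ZMod p) = 0 := by
  rcases le_or_gt (ℓ + m) n with hℓm | hℓm
  · exact eval_eq_zero_of_valMinAbs_le_of_add_le hp hn hnp hnm hℓm hK hf hbound
  -- the reflection `i ↦ n - i`, `f ↦ -f (n - X)` preserves the hypotheses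
  set f' := -(f.comp (C (n : ZMod p) - X))
  have hreflect : ∀ x y : ZMod p, f'.eval x / (x - (n - y)) = f.eval (n - x) / (n - x - y) := by
    intro x y
    rw [show x - (n - y) = -(n - x - y) by ring, eval_neg, eval_comp, neg_div_neg_eq]
    simp
  have key := eval_eq_zero_of_valMinAbs_le_of_add_le (ℓ := n - ℓ) (f := f') hp hn hnp hnm
    (by omega) hK (f.degree_neg_comp_sub_le hf n) fun i hi hiℓ ↦ by
      rw [Nat.cast_sub hℓ, hreflect, ← Nat.cast_sub hi]
      exact hbound (n - i) (by omega) (by omega)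
  simpa [f', Nat.cast_sub hℓ] using key

theorem stmt_12_general (p n : ℕ) [Fact p.Prime] (hn : 2 ≤ n)
    (hnp : (n : ℝ) ≤ Real.sqrt p)
    (hkloo : ∀ f0 : ZMod p, f0 ≠ 0 → ∀ f2 : ZMod p,
      ‖∑ ν ∈ Finset.Icc 1 ⌈(n : ℝ) / 2⌉₊,
        Complex.exp (2 * Real.pi * Complex.I *
          (((f0 / (ν : ZMod p) + f2 * (ν : ZMod p)).val : ℕ) : ℂ) / (p : ℂ))‖
        ≤ 0.1 * n) :
    ∀ ℓ : ℕ, ℓ ≤ n → ∀ f : Polynomial (ZMod p), f.degree ≤ 2 →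
      (∀ i : ℕ, i ≤ n → i ≠ ℓ →
        |(f.eval (i : ZMod p) / ((i : ZMod p) - (ℓ : ZMod p))).valMinAbs| ≤
          (⌈(p : ℝ) / 8⌉₊ : ℤ)) →
      f.eval (ℓ : ZMod p) = 0 := by
  intro ℓ hℓ f hf hbound
  set m := ⌈(n : ℝ) / 2⌉₊
  have hK : ∀ a : ZMod p, a ≠ 0 → ∀ b, ‖incompleteKloosterman p m a b‖ ≤ 0.1 * n := by
    simpa [incompleteKloosterman, ZMod.stdAddChar_apply, ZMod.toCircle_apply] using hkloo
  have hnm : n ≤ 2 * m := by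
    have : (n : ℝ) / 2 ≤ m := Nat.le_ceil _
    exact_mod_cast (by linarith : (n : ℝ) ≤ 2 * m)
  have hmn : 2 * m ≤ n + 1 := by
    have : (m : ℝ) < n / 2 + 1 := Nat.ceil_lt_add_one (by positivity)
    have : 2 * m < n + 2 := by exact_mod_cast (by linarith : (2 * m : ℝ) < n + 2)
    omega
  have hn2p : n ^ 2 ≤ p := by
    exact_mod_cast (Real.le_sqrt (by positivity) (by positivity)).1 hnp
  rcases lt_or_ge n 10 with hsmall | hbig
  · obtain ⟨b, hb⟩ := exists_sq_le_norm_incompleteKloosterman (m := m) (by nlinarith) (1 : ZMod p)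
    have hsmallR : (n : ℝ) < 10 := by exact_mod_cast hsmall
    have hm1 : (1 : ℝ) ≤ m := by exact_mod_cast (show 1 ≤ m by omega)
    nlinarith [hK 1 one_ne_zero b, norm_nonneg (incompleteKloosterman p m 1 b)]
  · exact eval_eq_zero_of_valMinAbs_le (by nlinarith) (by omega) (by nlinarith)
      hnm hmn hK hℓ hf hbound

theorem stmt_12 (p n : ℕ) [Fact p.Prime] (hodd : Odd p) (hn : 2 ≤ n)
    (hnp : (n : ℝ) ≤ Real.sqrt p)
    (hkloo : ∀ f0 : ZMod p, f0 ≠ 0 → ∀ f2 : ZMod p,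
      ‖∑ ν ∈ Finset.Icc 1 ⌈(n : ℝ) / 2⌉₊,
        Complex.exp (2 * Real.pi * Complex.I *
          (((f0 / (ν : ZMod p) + f2 * (ν : ZMod p)).val : ℕ) : ℂ) / (p : ℂ))‖
        ≤ 0.1 * n) :
    ∀ ℓ : ℕ, ℓ ≤ n → ∀ f : Polynomial (ZMod p), f.degree ≤ 2 →
      (∀ i : ℕ, i ≤ n → i ≠ ℓ →
        |(f.eval (i : ZMod p) / ((i : ZMod p) - (ℓ : ZMod p))).valMinAbs| ≤
          (⌈(p : ℝ) / 8⌉₊ : ℤ)) →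
      f.eval (ℓ : ZMod p) = 0 :=
  stmt_12_general p n hn hnp hkloo
end

section
/- Let p be an odd prime, C ⊆ F_p^n a linear code, ℓ ∈ {1,...,n}, t < p/2 a positive integer, and γ_i ∈ F_p nonzero for i ≠ ℓ. Suppose every codeword c ∈ C satisfying that γ_i^{-1}·c_i has integer representative in [-t, t] for all i ≠ ℓ has c_ℓ = 0. Then for any two codewords c, c' ∈ C, if for every i ≠ ℓ the elements γ_i^{-1}·c_i and γ_i^{-1}·c'_i lie in the same block {jt,...,jt+t-1} of the partition of {0,...,p-1} into intervals of length t, then c_ℓ = c'_ℓ. -/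
theorem stmt_17 (p n : ℕ) [Fact p.Prime] (hodd : Odd p)
    (C : Submodule (ZMod p) (Fin n → ZMod p)) (ℓ : Fin n) (t : ℕ) (ht : 0 < t)
    (htp : 2 * t < p) (γ : Fin n → ZMod p) (hγ : ∀ i, i ≠ ℓ → γ i ≠ 0)
    (hrep : ∀ c ∈ C, (∀ i, i ≠ ℓ → |((γ i)⁻¹ * c i).valMinAbs| ≤ (t : ℤ)) → c ℓ = 0) :
    ∀ c ∈ C, ∀ c' ∈ C,
      (∀ i, i ≠ ℓ → ∃ j : ℕ,
        (j * t ≤ ((γ i)⁻¹ * c i).val ∧ ((γ i)⁻¹ * c i).val < j * t + t) ∧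
        (j * t ≤ ((γ i)⁻¹ * c' i).val ∧ ((γ i)⁻¹ * c' i).val < j * t + t)) →
      c ℓ = c' ℓ := by
  intro c hc c' hc' hblock
  haveI : NeZero p := ⟨(Fact.out : p.Prime).ne_zero⟩
  have key : (c - c') ℓ = 0 := by
    apply hrep (c - c') (sub_mem hc hc')
    intro i hi
    obtain ⟨j, ⟨h1, h2⟩, ⟨h3, h4⟩⟩ := hblock i hi
    set a := (γ i)⁻¹ * c i with ha
    set b := (γ i)⁻¹ * c' i with hb
    have hm : (γ i)⁻¹ * (c - c') i = ((((a.val : ℤ) - b.val) : ℤ) : ZMod p) := by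
      push_cast
      simp only [ZMod.natCast_val, ZMod.cast_id]
      simp [ha, hb, Pi.sub_apply, mul_sub]
    have habs : |(a.val : ℤ) - b.val| ≤ (t : ℤ) := by
      rw [abs_le]; omega
    rw [hm]
    have : (((a.val : ℤ) - b.val : ℤ) : ZMod p).valMinAbs = (a.val : ℤ) - b.val := by
      rw [ZMod.valMinAbs_spec]
      refine ⟨rfl, ?_, ?_⟩ <;>
        · rw [abs_le] at habs; push_cast; omega
    rw [this]
    exact habs
  have := sub_eq_zero.mp key
  simpa [sub_eq_zero] using key
end
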